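/- Let 0 ≤ k ≤ n be integers. The Schubert cochain complex over ℤ is isomorphic, as a cochain complex of abelian groups, to the direct sum over all S ∈ {n;k} with Out(S) = ∅ of the card(In(S))-fold tensor power D^{⊗card(In(S))}, shifted so that this tensor power occupies cohomological degrees d(S) − card(In(S)) through d(S). -/

import Mathlib

open scoped BigOperators Classical

/-- `{n;k}`: the set of subsets of `{1,…,n}` of cardinality `k`. -/
def Sset (n k : ℕ) : Finset (Finset ℕ) := (Finset.Icc 1 n).powersetCard k

/-- `elt S r` is `s_r`, the `r`-th smallest element of `S` (1-indexed); junk value `0` out of range. -/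
def elt (S : Finset ℕ) (r : ℕ) : ℕ := (S.sort (· ≤ ·)).getD (r - 1) 0

/-- `s_{r+1}`, with the convention `s_{k+1} = n+1`. -/
def nxt (n : ℕ) (S : Finset ℕ) (r : ℕ) : ℕ := if r = S.card then n + 1 else elt S (r + 1)

/-- `s_{r-1}`, with the convention `s_0 = 0`. -/
def prv (S : Finset ℕ) (r : ℕ) : ℕ := if r = 1 then 0 else elt S (r - 1)

/-- `d_r(S) = Σ_{r ≤ i ≤ k} (s_i − i)`. -/
def dr (S : Finset ℕ) (r : ℕ) : ℕ := ∑ i ∈ Finset.Icc r S.card, (elt S i - i)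

/-- `d(S) = d_1(S)`. -/
def dS (S : Finset ℕ) : ℕ := dr S 1

/-- `S_r`: the set obtained from `S` by replacing `s_r` with `s_r + 1`. -/
def Sr (S : Finset ℕ) (r : ℕ) : Finset ℕ := insert (elt S r + 1) (S.erase (elt S r))

/-- `In(S) = {i ∈ {1,…,k} : s_i ≡ k (mod 2) and s_{i−1} < s_i − 1}` (convention `s_0 = 0`). -/
def InS (k : ℕ) (S : Finset ℕ) : Finset ℕ :=
  (Finset.Icc 1 k).filter fun i => elt S i % 2 = k % 2 ∧ prv S i + 1 < elt S i

/-- `Out(S) = {i ∈ {1,…,k} : s_i ≢ k (mod 2) and s_i + 1 < s_{i+1}}` (convention `s_{k+1} = n+1`). -/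
def OutS (n k : ℕ) (S : Finset ℕ) : Finset ℕ :=
  (Finset.Icc 1 k).filter fun i => ¬ (elt S i % 2 = k % 2) ∧ elt S i + 1 < nxt n S i

/-- The coefficient of `T` in the Schubert differential `δ(S)`. -/
noncomputable def schubCoeff (n k : ℕ) (R : Type*) [CommRing R] (T S : Finset ℕ) : R :=
  ∑ r ∈ Finset.Icc 1 k,
    if 1 < nxt n S r - elt S r ∧ Odd ((k : ℤ) - elt S r) ∧ T = Sr S r
    then (-1 : R) ^ dr S r * 2 else 0

/-- The matrix of the Schubert differential on the basis `{n;k}`. -/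
noncomputable def schubD (n k : ℕ) (R : Type*) [CommRing R] :
    Matrix ↥(Sset n k) ↥(Sset n k) R :=
  fun T S => schubCoeff n k R T.1 S.1

/-- An isomorphism of (co)chain complexes, where a complex is presented by a finite basis `ι`,
a degree function `deg : ι → ℤ`, and the matrix `D` of its differential: an `R`-linear
equivalence commuting with the differentials and preserving the grading. -/
def CxIso {ι κ : Type*} [Fintype ι] [Fintype κ] (R : Type*) [CommRing R]
    (D₁ : Matrix ι ι R) (deg₁ : ι → ℤ) (D₂ : Matrix κ κ R) (deg₂ : κ → ℤ) : Prop :=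
  ∃ e : (ι → R) ≃ₗ[R] (κ → R),
    (∀ v, e (D₁.mulVec v) = D₂.mulVec (e v)) ∧
    (∀ (m : ℤ) (v : ι → R), (∀ i, deg₁ i ≠ m → v i = 0) → ∀ j, deg₂ j ≠ m → e v j = 0) ∧
    (∀ (m : ℤ) (w : κ → R), (∀ j, deg₂ j ≠ m → w j = 0) → ∀ i, deg₁ i ≠ m → e.symm w i = 0)

/-- The index set of `⊕_{S : Out(S) = ∅} D^{⊗ In(S)}`: pairs `(S, B)` with `S ∈ {n;k}`,
`Out(S) = ∅` and `B ⊆ In(S)` (recording the tensor factors currently in degree `1`). -/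
noncomputable def cubesIdx (n k : ℕ) : Finset (Finset ℕ × Finset ℕ) :=
  (((Sset n k).filter fun S => OutS n k S = ∅) ×ˢ (Finset.Icc 1 k).powerset).filter
    fun p => p.2 ⊆ InS k p.1

/-- The coefficient of `B'` in the differential of the basis vector `B` of the tensor power
`D^{⊗U}` of the two-term cochain complex `D = (ℤ →2→ ℤ)`, with factors indexed by the finite
set `U` in increasing order and the usual Koszul signs. -/
def cubeUp (U B' B : Finset ℕ) : ℤ :=
  ∑ i ∈ U, if i ∉ B ∧ B' = insert i B then (-1 : ℤ) ^ (B.filter (· < i)).card * 2 else 0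

/-- The differential of `⊕_{S : Out(S) = ∅} D^{⊗ In(S)}[d(S) − card In(S)]`. -/
noncomputable def cubesD (n k : ℕ) : Matrix ↥(cubesIdx n k) ↥(cubesIdx n k) ℤ :=
  fun p q => if p.1.1 = q.1.1 then cubeUp (InS k q.1.1) p.1.2 q.1.2 else 0

/-!
The positions `r ∈ Out(S)` are exactly those at which `δ` moves `s_r` to `s_r + 1`. Raising all
of them gives `T = cubeTop S` with `Out(T) = ∅` and `Out(S) ⊆ In(T)`; conversely, lowering the
entries of `T` at any subset of `In(T)` gives back an element of `{n;k}`. So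
`S ↦ (T, In(T) \ Out(S))` is a degree-preserving bijection from `{n;k}` onto the basis of
`⊕_{Out(T) = ∅} D^{⊗ In(T)}`, and it turns the move at `r` into switching the `r`-th tensor
factor from degree `0` to degree `1`. Both differentials therefore have the same entries `±2` in
the same places, and a sign change of the basis reconciles the Schubert signs `(-1)^{d_r(S)}`
with the Koszul signs.
-/

open Finset

theorem cxIso_of_equiv {ι κ : Type*} [Fintype ι] [Fintype κ] {R : Type*} [CommRing R]
    {D₁ : Matrix ι ι R} {deg₁ : ι → ℤ} {D₂ : Matrix κ κ R} {deg₂ : κ → ℤ}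
    (e : ι ≃ κ) (ε : ι → Rˣ) (hD : ∀ i j, D₂ (e i) (e j) * ε j = ε i * D₁ i j)
    (hdeg : ∀ i, deg₂ (e i) = deg₁ i) :
    CxIso R D₁ deg₁ D₂ deg₂ := by
  let E : (ι → R) ≃ₗ[R] (κ → R) :=
    (LinearEquiv.piCongrRight fun i => LinearEquiv.smulOfUnit (ε i)).trans
      (LinearEquiv.funCongrLeft R R e.symm)
  have hE : ∀ v j, E v (e j) = ε j * v j := fun v j => by
    simp [E, LinearEquiv.smulOfUnit, Units.smul_def]
  have hE' : ∀ w i, E.symm w i = (ε i)⁻¹ * w (e i) := fun w i => by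
    simp [E, LinearEquiv.smulOfUnit, Units.smul_def, LinearEquiv.funCongrLeft]
  refine ⟨E, fun v => ?_, fun m v hv q hq => ?_, fun m w hw i hi => ?_⟩
  · funext q
    obtain ⟨i, rfl⟩ := e.surjective q
    simp only [hE, Matrix.mulVec, dotProduct, mul_sum]
    rw [← e.sum_comp]
    refine sum_congr rfl fun j _ => ?_
    rw [hE]
    linear_combination -(v j) * hD i j
  · obtain ⟨i, rfl⟩ := e.surjective q
    rw [hE, hv i (hdeg i ▸ hq), mul_zero]
  · rw [hE', hw (e i) (by rwa [hdeg]), mul_zero]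

noncomputable def ofFun (k : ℕ) (f : ℕ → ℕ) : Finset ℕ :=
  ((List.range' 1 k).map f).toFinset

section ofFun

variable {k : ℕ} {f g : ℕ → ℕ}

theorem ofFun_congr (h : ∀ i, 1 ≤ i → i ≤ k → f i = g i) : ofFun k f = ofFun k g := by
  unfold ofFun
  congr 1
  refine List.map_congr_left fun i hi => ?_
  rw [List.mem_range'_1] at hi
  exact h i (by omega) (by omega)

theorem mem_ofFun {x : ℕ} : x ∈ ofFun k f ↔ ∃ i, 1 ≤ i ∧ i ≤ k ∧ f i = x := by
  simp only [ofFun, List.mem_toFinset, List.mem_map, List.mem_range'_1]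
  constructor
  · rintro ⟨i, hi, rfl⟩; exact ⟨i, by omega, by omega, rfl⟩
  · rintro ⟨i, h1, h2, rfl⟩; exact ⟨i, by omega, rfl⟩

variable (hf : StrictMonoOn f (Set.Icc 1 k))
include hf

theorem sort_ofFun : (ofFun k f).sort (· ≤ ·) = (List.range' 1 k).map f := by
  have hs : ((List.range' 1 k).map f).Pairwise (· < ·) := by
    rw [List.pairwise_iff_getElem]
    intro i j hi hj hij
    simp only [List.length_map, List.length_range'] at hi hj
    simp only [List.getElem_map, List.getElem_range']
    exact hf ⟨by omega, by omega⟩ ⟨by omega, by omega⟩ (by omega)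
  exact (List.toFinset_sort (· ≤ ·) hs.nodup).mpr (hs.imp le_of_lt)

theorem elt_ofFun {r : ℕ} (h1 : 1 ≤ r) (h2 : r ≤ k) : elt (ofFun k f) r = f r := by
  rw [elt, sort_ofFun hf, List.getD_eq_getElem _ _ (by simp; omega)]
  simp only [List.getElem_map, List.getElem_range']
  congr 1
  omega

theorem card_ofFun : (ofFun k f).card = k := by
  rw [← Finset.length_sort (· ≤ ·), sort_ofFun hf, List.length_map, List.length_range']

theorem ofFun_mem_Sset {n : ℕ} (hbd : ∀ i, 1 ≤ i → i ≤ k → 1 ≤ f i ∧ f i ≤ n) :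
    ofFun k f ∈ Sset n k := by
  refine mem_powersetCard.mpr ⟨fun x hx => ?_, card_ofFun hf⟩
  obtain ⟨i, hi1, hi2, rfl⟩ := mem_ofFun.mp hx
  exact mem_Icc.mpr (hbd i hi1 hi2)

end ofFun

section elt

variable {n k : ℕ} {S : Finset ℕ}

theorem card_eq_of_mem_Sset (hS : S ∈ Sset n k) : S.card = k := (mem_powersetCard.mp hS).2

theorem length_sort_of_mem_Sset (hS : S ∈ Sset n k) : (S.sort (· ≤ ·)).length = k := by
  rw [Finset.length_sort, card_eq_of_mem_Sset hS]

theorem ofFun_elt (hS : S ∈ Sset n k) : ofFun k (elt S) = S := by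
  have : (List.range' 1 k).map (elt S) = S.sort (· ≤ ·) := by
    refine List.ext_getElem (by simp [length_sort_of_mem_Sset hS]) fun i hi _ => ?_
    simp only [List.getElem_map, List.getElem_range']
    rw [elt, List.getD_eq_getElem _ _ (by simp at hi; rw [length_sort_of_mem_Sset hS]; omega)]
    congr 1
    omega
  rw [ofFun, this, Finset.sort_toFinset]

theorem elt_strictMonoOn (hS : S ∈ Sset n k) : StrictMonoOn (elt S) (Set.Icc 1 k) := by
  rintro i ⟨hi1, hi2⟩ j ⟨hj1, hj2⟩ hij
  have hlen := length_sort_of_mem_Sset hS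
  rw [elt, elt, List.getD_eq_getElem _ _ (by omega), List.getD_eq_getElem _ _ (by omega)]
  exact List.pairwise_iff_getElem.mp (Finset.sortedLT_sort S).pairwise _ _ _ _ (by omega)

theorem elt_lt_elt (hS : S ∈ Sset n k) {i j : ℕ} (hi : 1 ≤ i) (hij : i < j) (hj : j ≤ k) :
    elt S i < elt S j :=
  elt_strictMonoOn hS ⟨hi, by omega⟩ ⟨by omega, hj⟩ hij

theorem elt_mem (hS : S ∈ Sset n k) {r : ℕ} (h1 : 1 ≤ r) (h2 : r ≤ k) : elt S r ∈ S := by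
  rw [elt, List.getD_eq_getElem _ _ (by rw [length_sort_of_mem_Sset hS]; omega),
    ← Finset.mem_sort (· ≤ ·)]
  exact List.getElem_mem _

theorem one_le_elt (hS : S ∈ Sset n k) {r : ℕ} (h1 : 1 ≤ r) (h2 : r ≤ k) : 1 ≤ elt S r :=
  (mem_Icc.mp ((mem_powersetCard.mp hS).1 (elt_mem hS h1 h2))).1

theorem elt_le (hS : S ∈ Sset n k) {r : ℕ} (h1 : 1 ≤ r) (h2 : r ≤ k) : elt S r ≤ n :=
  (mem_Icc.mp ((mem_powersetCard.mp hS).1 (elt_mem hS h1 h2))).2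

theorem le_elt_self (hS : S ∈ Sset n k) {r : ℕ} (h1 : 1 ≤ r) (h2 : r ≤ k) :
    r ≤ elt S r := by
  induction r with
  | zero => omega
  | succ m ih =>
    show m + 1 ≤ elt S (m + 1)
    rcases Nat.eq_zero_or_pos m with rfl | hm
    · exact one_le_elt hS h1 h2
    · have := elt_lt_elt hS hm (lt_add_one m) h2
      have := ih hm (by omega)
      omega

theorem exists_elt_eq (hS : S ∈ Sset n k) {x : ℕ} (hx : x ∈ S) :
    ∃ r, 1 ≤ r ∧ r ≤ k ∧ elt S r = x := by
  rw [← ofFun_elt hS] at hx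
  exact mem_ofFun.mp hx

end elt

/-- `s_i` for `0 ≤ i ≤ k + 1`, with the conventions `s_0 = 0` and `s_{k+1} = n + 1`. -/
def eltExt (n k : ℕ) (S : Finset ℕ) (i : ℕ) : ℕ :=
  if i = 0 then 0 else if i ≤ k then elt S i else n + 1

section eltExt

variable {n k : ℕ} {S : Finset ℕ}

@[simp]
theorem eltExt_zero : eltExt n k S 0 = 0 := rfl

theorem eltExt_of_le {i : ℕ} (h1 : 1 ≤ i) (h2 : i ≤ k) : eltExt n k S i = elt S i := by
  rw [eltExt, if_neg (by omega), if_pos h2]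

theorem eltExt_of_lt {i : ℕ} (h : k < i) : eltExt n k S i = n + 1 := by
  rw [eltExt, if_neg (by omega), if_neg (by omega)]

theorem eltExt_lt_eltExt (hS : S ∈ Sset n k) {i j : ℕ} (hij : i < j) (hj : j ≤ k + 1) :
    eltExt n k S i < eltExt n k S j := by
  rcases Nat.eq_zero_or_pos i with rfl | hi
  · rw [eltExt_zero]
    rcases Nat.lt_or_ge k j with hjk | hjk
    · rw [eltExt_of_lt hjk]; omega
    · rw [eltExt_of_le hij hjk]; exact one_le_elt hS hij hjk
  · rw [eltExt_of_le hi (by omega)]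
    rcases Nat.lt_or_ge k j with hjk | hjk
    · rw [eltExt_of_lt hjk]; have := elt_le hS hi (by omega); omega
    · rw [eltExt_of_le (by omega) hjk]; exact elt_lt_elt hS hi hij hjk

theorem eltExt_le_eltExt (hS : S ∈ Sset n k) {i j : ℕ} (hij : i ≤ j) (hj : j ≤ k + 1) :
    eltExt n k S i ≤ eltExt n k S j := by
  rcases hij.eq_or_lt with rfl | hij
  · exact le_rfl
  · exact (eltExt_lt_eltExt hS hij hj).le

theorem eltExt_le (hS : S ∈ Sset n k) {j : ℕ} (hj : j ≤ k + 1) :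
    eltExt n k S j ≤ n + 1 := by
  simpa only [eltExt_of_lt (lt_add_one k)] using eltExt_le_eltExt hS hj le_rfl

theorem nxt_eq_eltExt (hS : S ∈ Sset n k) {r : ℕ} (h1 : 1 ≤ r) (h2 : r ≤ k) :
    nxt n S r = eltExt n k S (r + 1) := by
  rw [nxt, card_eq_of_mem_Sset hS]
  split_ifs with hr
  · rw [eltExt_of_lt (by omega)]
  · rw [eltExt_of_le (by omega) (by omega)]

theorem prv_eq_eltExt {r : ℕ} (h1 : 1 ≤ r) (h2 : r ≤ k) :
    prv S r = eltExt n k S (r - 1) := by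
  rw [prv]
  split_ifs with hr
  · rw [hr, Nat.sub_self, eltExt_zero]
  · rw [eltExt_of_le (by omega) (by omega)]

theorem mem_OutS_iff (hS : S ∈ Sset n k) {i : ℕ} :
    i ∈ OutS n k S ↔ (1 ≤ i ∧ i ≤ k) ∧ ¬ elt S i % 2 = k % 2 ∧
      elt S i + 1 < eltExt n k S (i + 1) := by
  rw [OutS, mem_filter, mem_Icc]
  exact and_congr_right fun ⟨h1, h2⟩ => by rw [nxt_eq_eltExt hS h1 h2]

theorem mem_InS_iff {i : ℕ} :
    i ∈ InS k S ↔ (1 ≤ i ∧ i ≤ k) ∧ elt S i % 2 = k % 2 ∧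
      eltExt n k S (i - 1) + 1 < elt S i := by
  rw [InS, mem_filter, mem_Icc]
  exact and_congr_right fun ⟨h1, h2⟩ => by rw [prv_eq_eltExt h1 h2]

theorem OutS_subset_Icc : OutS n k S ⊆ Icc 1 k := filter_subset _ _

theorem InS_subset_Icc : InS k S ⊆ Icc 1 k := filter_subset _ _

end eltExt

noncomputable def raise (k : ℕ) (S A : Finset ℕ) : Finset ℕ :=
  ofFun k fun i => elt S i + if i ∈ A then 1 else 0

noncomputable def lower (k : ℕ) (S A : Finset ℕ) : Finset ℕ :=
  ofFun k fun i => elt S i - if i ∈ A then 1 else 0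

section raise

variable {n k : ℕ} {S A : Finset ℕ} (hS : S ∈ Sset n k)
  (hgap : ∀ a ∈ A, elt S a + 1 < eltExt n k S (a + 1))
include hS hgap

theorem raise_strictMonoOn :
    StrictMonoOn (fun i => elt S i + if i ∈ A then 1 else 0) (Set.Icc 1 k) := by
  rintro i ⟨hi1, hi2⟩ j ⟨hj1, hj2⟩ hij
  have hlt := elt_lt_elt hS hi1 hij hj2
  by_cases hiA : i ∈ A
  · have hle := eltExt_le_eltExt hS (show i + 1 ≤ j by omega) (by omega)
    rw [eltExt_of_le hj1 hj2] at hle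
    have := hgap i hiA
    simp only [if_pos hiA]
    split_ifs <;> omega
  · simp only [if_neg hiA]
    split_ifs <;> omega

theorem raise_mem_Sset : raise k S A ∈ Sset n k := by
  refine ofFun_mem_Sset (raise_strictMonoOn hS hgap) fun i h1 h2 => ?_
  have := one_le_elt hS h1 h2
  have := elt_le hS h1 h2
  split_ifs with hiA
  · have := hgap i hiA
    have := eltExt_le hS (show i + 1 ≤ k + 1 by omega)
    omega
  · omega

theorem elt_raise {i : ℕ} (h1 : 1 ≤ i) (h2 : i ≤ k) :
    elt (raise k S A) i = elt S i + if i ∈ A then 1 else 0 :=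
  elt_ofFun (raise_strictMonoOn hS hgap) h1 h2

theorem lower_raise : lower k (raise k S A) A = S := by
  conv_rhs => rw [← ofFun_elt hS]
  exact ofFun_congr fun i h1 h2 => by rw [elt_raise hS hgap h1 h2]; omega

theorem dr_raise {r : ℕ} (hr : 1 ≤ r) : dr (raise k S A) r = dr S r + #(Icc r k ∩ A) := by
  have hcard := card_eq_of_mem_Sset (raise_mem_Sset hS hgap)
  rw [dr, dr, hcard, card_eq_of_mem_Sset hS, ← filter_mem_eq_inter, card_filter,
    ← sum_add_distrib]
  refine sum_congr rfl fun i hi => ?_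
  obtain ⟨h1, h2⟩ := mem_Icc.mp hi
  rw [elt_raise hS hgap (by omega) h2]
  have := le_elt_self hS (by omega : 1 ≤ i) h2
  split_ifs <;> omega

variable (hA : A ⊆ Icc 1 k)
include hA

theorem eltExt_raise {j : ℕ} (hj : j ≤ k + 1) :
    eltExt n k (raise k S A) j = eltExt n k S j + if j ∈ A then 1 else 0 := by
  by_cases hjk : 1 ≤ j ∧ j ≤ k
  · rw [eltExt_of_le hjk.1 hjk.2, eltExt_of_le hjk.1 hjk.2, elt_raise hS hgap hjk.1 hjk.2]
  · have hjA : j ∉ A := fun h => hjk (mem_Icc.mp (hA h))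
    rw [if_neg hjA, add_zero]
    rcases Nat.eq_zero_or_pos j with rfl | hj0
    · rfl
    · rw [eltExt_of_lt (by omega), eltExt_of_lt (by omega)]

end raise

section lower

variable {n k : ℕ} {T A : Finset ℕ} (hT : T ∈ Sset n k)
  (hgap : ∀ a ∈ A, eltExt n k T (a - 1) + 1 < elt T a)
include hT hgap

theorem lower_strictMonoOn :
    StrictMonoOn (fun i => elt T i - if i ∈ A then 1 else 0) (Set.Icc 1 k) := by
  rintro i ⟨hi1, hi2⟩ j ⟨hj1, hj2⟩ hij
  have hlt := elt_lt_elt hT hi1 hij hj2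
  by_cases hjA : j ∈ A
  · have hle := eltExt_le_eltExt hT (show i ≤ j - 1 by omega) (by omega)
    rw [eltExt_of_le hi1 hi2] at hle
    have := hgap j hjA
    simp only [if_pos hjA]
    split_ifs <;> omega
  · simp only [if_neg hjA]
    split_ifs <;> omega

theorem lower_mem_Sset : lower k T A ∈ Sset n k := by
  refine ofFun_mem_Sset (lower_strictMonoOn hT hgap) fun i h1 h2 => ?_
  have := one_le_elt hT h1 h2
  have := elt_le hT h1 h2
  split_ifs with hiA
  · have := hgap i hiA
    omega
  · omega

theorem elt_lower {i : ℕ} (h1 : 1 ≤ i) (h2 : i ≤ k) :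
    elt (lower k T A) i = elt T i - if i ∈ A then 1 else 0 :=
  elt_ofFun (lower_strictMonoOn hT hgap) h1 h2

theorem raise_lower : raise k (lower k T A) A = T := by
  conv_rhs => rw [← ofFun_elt hT]
  refine ofFun_congr fun i h1 h2 => ?_
  rw [elt_lower hT hgap h1 h2]
  have := one_le_elt hT h1 h2
  split_ifs <;> omega

variable (hA : A ⊆ Icc 1 k)
include hA

theorem eltExt_lower {j : ℕ} (hj : j ≤ k + 1) :
    eltExt n k (lower k T A) j = eltExt n k T j - if j ∈ A then 1 else 0 := by
  by_cases hjk : 1 ≤ j ∧ j ≤ k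
  · rw [eltExt_of_le hjk.1 hjk.2, eltExt_of_le hjk.1 hjk.2, elt_lower hT hgap hjk.1 hjk.2]
  · have hjA : j ∉ A := fun h => hjk (mem_Icc.mp (hA h))
    rw [if_neg hjA, Nat.sub_zero]
    rcases Nat.eq_zero_or_pos j with rfl | hj0
    · rfl
    · rw [eltExt_of_lt (by omega), eltExt_of_lt (by omega)]

end lower

section OutIn

variable {n k : ℕ} {S T A : Finset ℕ} {r : ℕ}

theorem gap_of_mem_OutS (hS : S ∈ Sset n k) (hr : r ∈ OutS n k S) :
    elt S r + 1 < eltExt n k S (r + 1) :=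
  ((mem_OutS_iff hS).mp hr).2.2

theorem gap_of_mem_InS (hr : r ∈ InS k S) : eltExt n k S (r - 1) + 1 < elt S r :=
  (mem_InS_iff.mp hr).2.2

theorem Sr_eq_raise (hS : S ∈ Sset n k) (hr : r ∈ OutS n k S) : Sr S r = raise k S {r} := by
  obtain ⟨⟨h1, h2⟩, -, -⟩ := (mem_OutS_iff hS).mp hr
  ext x
  rw [raise, mem_ofFun, Sr, mem_insert, mem_erase]
  constructor
  · rintro (rfl | ⟨hne, hxS⟩)
    · exact ⟨r, h1, h2, by simp⟩
    · obtain ⟨i, hi1, hi2, rfl⟩ := exists_elt_eq hS hxS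
      have hir : i ∉ ({r} : Finset ℕ) := fun h => hne (by rw [mem_singleton.mp h])
      exact ⟨i, hi1, hi2, by rw [if_neg hir, add_zero]⟩
  · rintro ⟨i, hi1, hi2, rfl⟩
    by_cases hir : i = r
    · subst hir
      simp
    · rw [if_neg (by simpa using hir), add_zero]
      exact Or.inr ⟨fun he => hir ((elt_strictMonoOn hS).injOn ⟨hi1, hi2⟩ ⟨h1, h2⟩ he),
        elt_mem hS hi1 hi2⟩

theorem gap_singleton (hS : S ∈ Sset n k) (hr : r ∈ OutS n k S) :
    ∀ a ∈ ({r} : Finset ℕ), elt S a + 1 < eltExt n k S (a + 1) := fun _ ha =>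
  (mem_singleton.mp ha) ▸ gap_of_mem_OutS hS hr

theorem Sr_mem_Sset (hS : S ∈ Sset n k) (hr : r ∈ OutS n k S) : Sr S r ∈ Sset n k := by
  rw [Sr_eq_raise hS hr]
  exact raise_mem_Sset hS (gap_singleton hS hr)

theorem elt_Sr (hS : S ∈ Sset n k) (hr : r ∈ OutS n k S) {i : ℕ} (h1 : 1 ≤ i)
    (h2 : i ≤ k) :
    elt (Sr S r) i = elt S i + if i = r then 1 else 0 := by
  rw [Sr_eq_raise hS hr, elt_raise hS (gap_singleton hS hr) h1 h2]
  simp only [mem_singleton]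

theorem eltExt_Sr (hS : S ∈ Sset n k) (hr : r ∈ OutS n k S) {j : ℕ} (hj : j ≤ k + 1) :
    eltExt n k (Sr S r) j = eltExt n k S j + if j = r then 1 else 0 := by
  have hrk : {r} ⊆ Icc 1 k := singleton_subset_iff.mpr (OutS_subset_Icc hr)
  rw [Sr_eq_raise hS hr, eltExt_raise hS (gap_singleton hS hr) hrk hj]
  simp only [mem_singleton]

theorem OutS_Sr (hS : S ∈ Sset n k) (hr : r ∈ OutS n k S) :
    OutS n k (Sr S r) = (OutS n k S).erase r := by
  obtain ⟨⟨h1, h2⟩, hpar, -⟩ := (mem_OutS_iff hS).mp hr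
  ext i
  rw [mem_OutS_iff (Sr_mem_Sset hS hr), mem_erase, mem_OutS_iff hS]
  constructor
  · rintro ⟨⟨i1, i2⟩, ipar, igap⟩
    rw [elt_Sr hS hr i1 i2] at ipar igap
    rw [eltExt_Sr hS hr (by omega : i + 1 ≤ k + 1)] at igap
    have hir : i ≠ r := by
      rintro rfl
      rw [if_pos rfl] at ipar
      omega
    simp only [if_neg hir, add_zero] at ipar igap
    refine ⟨hir, ⟨i1, i2⟩, ipar, ?_⟩
    split_ifs at igap with hi1r
    · rw [hi1r, eltExt_of_le h1 h2] at igap ⊢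
      omega
    · omega
  · rintro ⟨hir, ⟨i1, i2⟩, ipar, igap⟩
    rw [elt_Sr hS hr i1 i2, if_neg hir, eltExt_Sr hS hr (by omega : i + 1 ≤ k + 1)]
    exact ⟨⟨i1, i2⟩, by simpa using ipar, by split_ifs <;> omega⟩

theorem OutS_lower (hT : T ∈ Sset n k) (hout : OutS n k T = ∅) (hA : A ⊆ InS k T) :
    OutS n k (lower k T A) = A := by
  have hgap : ∀ a ∈ A, eltExt n k T (a - 1) + 1 < elt T a := fun a ha => gap_of_mem_InS (hA ha)
  have hAk : A ⊆ Icc 1 k := hA.trans InS_subset_Icc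
  ext i
  rw [mem_OutS_iff (lower_mem_Sset hT hgap)]
  constructor
  · rintro ⟨⟨i1, i2⟩, ipar, igap⟩
    rw [elt_lower hT hgap i1 i2] at ipar igap
    rw [eltExt_lower hT hgap hAk (by omega : i + 1 ≤ k + 1)] at igap
    by_contra hiA
    simp only [if_neg hiA, Nat.sub_zero] at ipar igap
    have hiT : i ∈ OutS n k T :=
      (mem_OutS_iff hT).mpr ⟨⟨i1, i2⟩, ipar, by split_ifs at igap <;> omega⟩
    simp [hout] at hiT
  · intro hiA
    obtain ⟨⟨i1, i2⟩, ipar, igap⟩ := (mem_InS_iff (n := n)).mp (hA hiA)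
    rw [elt_lower hT hgap i1 i2, if_pos hiA, eltExt_lower hT hgap hAk (by omega : i + 1 ≤ k + 1)]
    refine ⟨⟨i1, i2⟩, by omega, ?_⟩
    have hmono := eltExt_lt_eltExt hT (lt_add_one i) (by omega : i + 1 ≤ k + 1)
    rw [eltExt_of_le i1 i2] at hmono
    split_ifs with hnext
    · have hgap' := gap_of_mem_InS (n := n) (hA hnext)
      obtain ⟨-, hnext2⟩ := mem_Icc.mp (hAk hnext)
      rw [Nat.add_sub_cancel, eltExt_of_le i1 i2] at hgap'
      rw [eltExt_of_le (by omega) hnext2]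
      omega
    · omega

end OutIn

noncomputable def cubeTop (n k : ℕ) (S : Finset ℕ) : Finset ℕ := raise k S (OutS n k S)

/-- `S` corresponds to the basis vector of `D^{⊗ In(cubeTop S)}` whose factors in degree `1`
are those in `cubeFace S`. -/
noncomputable def cubeFace (n k : ℕ) (S : Finset ℕ) : Finset ℕ :=
  InS k (cubeTop n k S) \ OutS n k S

section cube

variable {n k : ℕ} {S T B : Finset ℕ} {r : ℕ}

theorem cubeTop_mem_Sset (hS : S ∈ Sset n k) : cubeTop n k S ∈ Sset n k :=
  raise_mem_Sset hS fun _ => gap_of_mem_OutS hS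

theorem elt_cubeTop (hS : S ∈ Sset n k) {i : ℕ} (h1 : 1 ≤ i) (h2 : i ≤ k) :
    elt (cubeTop n k S) i = elt S i + if i ∈ OutS n k S then 1 else 0 :=
  elt_raise hS (fun _ => gap_of_mem_OutS hS) h1 h2

theorem eltExt_cubeTop (hS : S ∈ Sset n k) {j : ℕ} (hj : j ≤ k + 1) :
    eltExt n k (cubeTop n k S) j = eltExt n k S j + if j ∈ OutS n k S then 1 else 0 :=
  eltExt_raise hS (fun _ => gap_of_mem_OutS hS) OutS_subset_Icc hj

theorem OutS_cubeTop (hS : S ∈ Sset n k) : OutS n k (cubeTop n k S) = ∅ := by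
  refine eq_empty_of_forall_notMem fun i hi => ?_
  obtain ⟨⟨h1, h2⟩, hpar, hgapT⟩ := (mem_OutS_iff (cubeTop_mem_Sset hS)).mp hi
  rw [elt_cubeTop hS h1 h2] at hpar hgapT
  rw [eltExt_cubeTop hS (by omega : i + 1 ≤ k + 1)] at hgapT
  by_cases hiO : i ∈ OutS n k S
  · have := ((mem_OutS_iff hS).mp hiO).2.1
    simp only [if_pos hiO] at hpar
    omega
  · simp only [if_neg hiO, add_zero] at hpar hgapT
    have hmono := eltExt_lt_eltExt hS (lt_add_one i) (by omega : i + 1 ≤ k + 1)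
    rw [eltExt_of_le h1 h2] at hmono
    have hnogap : ¬ elt S i + 1 < eltExt n k S (i + 1) := fun h =>
      hiO ((mem_OutS_iff hS).mpr ⟨⟨h1, h2⟩, hpar, h⟩)
    -- `s_{i+1} = s_i + 1`, so the gap above `i` in `cubeTop S` comes from raising `s_{i+1}`
    have hnext : i + 1 ∈ OutS n k S := by
      by_contra h
      simp only [if_neg h, add_zero] at hgapT
      omega
    obtain ⟨⟨-, h2'⟩, hpar', -⟩ := (mem_OutS_iff hS).mp hnext
    rw [← eltExt_of_le (n := n) (by omega) h2'] at hpar'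
    omega

theorem OutS_subset_InS_cubeTop (hS : S ∈ Sset n k) : OutS n k S ⊆ InS k (cubeTop n k S) := by
  intro i hiO
  obtain ⟨⟨h1, h2⟩, hpar, -⟩ := (mem_OutS_iff hS).mp hiO
  rw [mem_InS_iff (n := n), elt_cubeTop hS h1 h2,
    eltExt_cubeTop hS (by omega : i - 1 ≤ k + 1), if_pos hiO]
  refine ⟨⟨h1, h2⟩, by omega, ?_⟩
  have hmono := eltExt_lt_eltExt hS (by omega : i - 1 < i) (by omega : i ≤ k + 1)
  rw [eltExt_of_le h1 h2] at hmono
  split_ifs with hprev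
  · have hgap := gap_of_mem_OutS hS hprev
    obtain ⟨⟨p1, p2⟩, -, -⟩ := (mem_OutS_iff hS).mp hprev
    rw [Nat.sub_add_cancel h1, eltExt_of_le h1 h2] at hgap
    rw [eltExt_of_le p1 p2]
    omega
  · omega

theorem not_mem_cubeFace (hr : r ∈ OutS n k S) : r ∉ cubeFace n k S :=
  fun h => (mem_sdiff.mp h).2 hr

theorem InS_cubeTop_sdiff_cubeFace (hS : S ∈ Sset n k) :
    InS k (cubeTop n k S) \ cubeFace n k S = OutS n k S :=
  Finset.sdiff_sdiff_eq_self (OutS_subset_InS_cubeTop hS)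

theorem cubeTop_Sr (hS : S ∈ Sset n k) (hr : r ∈ OutS n k S) :
    cubeTop n k (Sr S r) = cubeTop n k S := by
  rw [cubeTop, cubeTop, raise, raise, OutS_Sr hS hr]
  refine ofFun_congr fun i h1 h2 => ?_
  rw [elt_Sr hS hr h1 h2]
  by_cases hir : i = r
  · subst hir
    simp [hr]
  · simp [hir]

theorem cubeFace_Sr (hS : S ∈ Sset n k) (hr : r ∈ OutS n k S) :
    cubeFace n k (Sr S r) = insert r (cubeFace n k S) := by
  rw [cubeFace, cubeFace, cubeTop_Sr hS hr, OutS_Sr hS hr,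
    sdiff_erase (OutS_subset_InS_cubeTop hS hr)]

theorem lower_cubeTop (hS : S ∈ Sset n k) :
    lower k (cubeTop n k S) (InS k (cubeTop n k S) \ cubeFace n k S) = S := by
  rw [InS_cubeTop_sdiff_cubeFace hS]
  exact lower_raise hS fun _ => gap_of_mem_OutS hS

variable (hT : T ∈ Sset n k) (hout : OutS n k T = ∅)
include hT hout

theorem cubeTop_lower : cubeTop n k (lower k T (InS k T \ B)) = T := by
  rw [cubeTop, OutS_lower hT hout sdiff_subset]
  exact raise_lower hT fun _ ha => gap_of_mem_InS (mem_sdiff.mp ha).1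

theorem cubeFace_lower (hB : B ⊆ InS k T) : cubeFace n k (lower k T (InS k T \ B)) = B := by
  rw [cubeFace, cubeTop_lower hT hout, OutS_lower hT hout sdiff_subset,
    Finset.sdiff_sdiff_eq_self hB]

end cube

theorem mem_cubesIdx {n k : ℕ} {p : Finset ℕ × Finset ℕ} :
    p ∈ cubesIdx n k ↔ p.1 ∈ Sset n k ∧ OutS n k p.1 = ∅ ∧ p.2 ⊆ InS k p.1 := by
  rw [cubesIdx, mem_filter, mem_product, mem_filter, mem_powerset]
  constructor
  · rintro ⟨⟨⟨hS, hO⟩, -⟩, hB⟩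
    exact ⟨hS, hO, hB⟩
  · rintro ⟨hS, hO, hB⟩
    exact ⟨⟨⟨hS, hO⟩, hB.trans InS_subset_Icc⟩, hB⟩

noncomputable def cubeEquiv (n k : ℕ) : Sset n k ≃ cubesIdx n k where
  toFun S := ⟨(cubeTop n k S, cubeFace n k S),
    mem_cubesIdx.mpr ⟨cubeTop_mem_Sset S.2, OutS_cubeTop S.2, sdiff_subset⟩⟩
  invFun p := ⟨lower k p.1.1 (InS k p.1.1 \ p.1.2),
    lower_mem_Sset (mem_cubesIdx.mp p.2).1 fun _ ha => gap_of_mem_InS (mem_sdiff.mp ha).1⟩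
  left_inv S := Subtype.ext (lower_cubeTop S.2)
  right_inv p := by
    obtain ⟨hT, hout, hB⟩ := mem_cubesIdx.mp p.2
    exact Subtype.ext (Prod.ext (cubeTop_lower hT hout) (cubeFace_lower hT hout hB))

theorem eq_of_cubeTop_eq_of_cubeFace_eq {n k : ℕ} {S T : Finset ℕ} (hS : S ∈ Sset n k)
    (hT : T ∈ Sset n k) (htop : cubeTop n k T = cubeTop n k S)
    (hface : cubeFace n k T = cubeFace n k S) : T = S := by
  rw [← lower_cubeTop hT, ← lower_cubeTop hS, htop, hface]

theorem cubeUp_insert {U B : Finset ℕ} {i : ℕ} (hi : i ∈ U) (hiB : i ∉ B) :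
    cubeUp U (insert i B) B = (-1) ^ #(B.filter (· < i)) * 2 := by
  rw [cubeUp, sum_eq_single_of_mem i hi, if_pos ⟨hiB, rfl⟩]
  rintro j - hji
  refine if_neg fun ⟨_, hij⟩ => ?_
  have : i ∈ insert j B := hij ▸ mem_insert_self i B
  exact (mem_insert.mp this).elim (fun h => hji h.symm) hiB

theorem cubeUp_eq_zero {U B' B : Finset ℕ} (h : ∀ i ∈ U, i ∉ B → B' ≠ insert i B) :
    cubeUp U B' B = 0 :=
  sum_eq_zero fun i hi => if_neg fun ⟨hiB, hB'⟩ => h i hi hiB hB'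

theorem odd_natCast_sub_iff (k s : ℕ) : Odd ((k : ℤ) - s) ↔ ¬ s % 2 = k % 2 := by
  rw [Int.odd_sub, Int.odd_coe_nat, Int.even_coe_nat, Nat.odd_iff, Nat.even_iff]
  omega

section schubCoeff

variable {n k : ℕ} {S T : Finset ℕ} (R : Type*) [CommRing R] (hS : S ∈ Sset n k)
include hS

theorem schubCond_iff {r : ℕ} (h1 : 1 ≤ r) (h2 : r ≤ k) :
    (1 < nxt n S r - elt S r ∧ Odd ((k : ℤ) - elt S r) ∧ T = Sr S r) ↔
      r ∈ OutS n k S ∧ T = Sr S r := by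
  rw [odd_natCast_sub_iff, mem_OutS_iff hS, nxt_eq_eltExt hS h1 h2]
  constructor
  · rintro ⟨hgap, hpar, hT⟩
    exact ⟨⟨⟨h1, h2⟩, hpar, by omega⟩, hT⟩
  · rintro ⟨⟨-, hpar, hgap⟩, hT⟩
    exact ⟨by omega, hpar, hT⟩

omit R in
theorem Sr_injOn : Set.InjOn (Sr S) (OutS n k S) := by
  intro r hr r' hr' h
  obtain ⟨⟨h1, h2⟩, -, -⟩ := (mem_OutS_iff hS).mp hr
  have := congrArg (elt · r) h
  rw [elt_Sr hS hr h1 h2, elt_Sr hS hr' h1 h2, if_pos rfl] at this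
  by_contra hne
  rw [if_neg hne] at this
  omega

theorem schubCoeff_Sr {r : ℕ} (hr : r ∈ OutS n k S) :
    schubCoeff n k R (Sr S r) S = (-1) ^ dr S r * 2 := by
  obtain ⟨⟨h1, h2⟩, -, -⟩ := (mem_OutS_iff hS).mp hr
  rw [schubCoeff, sum_eq_single_of_mem r (mem_Icc.mpr ⟨h1, h2⟩),
    if_pos ((schubCond_iff hS h1 h2).mpr ⟨hr, rfl⟩)]
  intro r' hr' hne
  obtain ⟨h1', h2'⟩ := mem_Icc.mp hr'
  exact if_neg fun h =>
    let ⟨hr'O, heq⟩ := (schubCond_iff hS h1' h2').mp h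
    hne (Sr_injOn hS hr'O hr heq.symm)

theorem schubCoeff_eq_zero (h : ∀ r ∈ OutS n k S, T ≠ Sr S r) : schubCoeff n k R T S = 0 := by
  refine sum_eq_zero fun r hr => if_neg fun hc => ?_
  obtain ⟨h1, h2⟩ := mem_Icc.mp hr
  exact (fun ⟨hrO, hT⟩ => h r hrO hT) ((schubCond_iff hS h1 h2).mp hc)

end schubCoeff

theorem card_filter_lt_insert {B : Finset ℕ} {r r' : ℕ} (hr : r ∉ B) :
    #((insert r B).filter (· < r')) = #(B.filter (· < r')) + if r < r' then 1 else 0 := by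
  rw [filter_insert]
  split_ifs
  · rw [card_insert_of_notMem fun h => hr (mem_of_mem_filter _ h)]
  · rfl

section sign

variable {n k : ℕ} {S : Finset ℕ} {r : ℕ}

/-- Exponent of the sign by which the basis vector of `S` is rescaled.  Raising `s_r` for
`r ∈ Out(S)` changes it by `d_r(S) + #{b ∈ cubeFace S | b < r}`, the difference of the
Schubert and Koszul sign exponents. -/
noncomputable def signExp (n k : ℕ) (S : Finset ℕ) : ℕ :=
  (∑ r ∈ OutS n k S, (dr S r + #((cubeFace n k S).filter (· < r)))) + (#(OutS n k S)).choose 2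

noncomputable def cubeSign (n k : ℕ) (S : Finset ℕ) : ℤˣ := (-1) ^ signExp n k S

theorem dr_Sr (hS : S ∈ Sset n k) (hr : r ∈ OutS n k S) {r' : ℕ} (hr' : 1 ≤ r') :
    dr (Sr S r) r' = dr S r' + if r' ≤ r then 1 else 0 := by
  obtain ⟨⟨-, h2⟩, -, -⟩ := (mem_OutS_iff hS).mp hr
  rw [Sr_eq_raise hS hr, dr_raise hS (gap_singleton hS hr) hr']
  split_ifs with h
  · rw [inter_singleton_of_mem (mem_Icc.mpr ⟨h, h2⟩), card_singleton]
  · rw [inter_singleton_of_notMem fun hm => h (mem_Icc.mp hm).1, card_empty]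

theorem signExp_Sr (hS : S ∈ Sset n k) (hr : r ∈ OutS n k S) :
    signExp n k (Sr S r) + (dr S r + #((cubeFace n k S).filter (· < r))) = signExp n k S := by
  have hsum : ∑ r' ∈ (OutS n k S).erase r,
      (dr (Sr S r) r' + #((insert r (cubeFace n k S)).filter (· < r'))) =
      ∑ r' ∈ (OutS n k S).erase r, ((dr S r' + #((cubeFace n k S).filter (· < r'))) + 1) := by
    refine sum_congr rfl fun r' hr' => ?_
    obtain ⟨-, hr'O⟩ := mem_erase.mp hr'
    rw [dr_Sr hS hr (mem_Icc.mp (OutS_subset_Icc hr'O)).1,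
      card_filter_lt_insert (not_mem_cubeFace hr)]
    split_ifs <;> omega
  -- `#Out(S)` choose 2 absorbs the `+ 1` contributed by each `r' ≠ r` above
  have hchoose : (#(OutS n k S)).choose 2 =
      (#(OutS n k S) - 1).choose 2 + (#(OutS n k S) - 1) := by
    obtain ⟨m, hm⟩ : ∃ m, #(OutS n k S) = m + 1 :=
      ⟨_, (Nat.succ_pred_eq_of_pos (card_pos.mpr ⟨r, hr⟩)).symm⟩
    rw [hm, Nat.choose_succ_succ', Nat.choose_one_right, Nat.add_sub_cancel, add_comm]
  rw [signExp, signExp, OutS_Sr hS hr, cubeFace_Sr hS hr, hsum, sum_add_distrib,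
    card_erase_of_mem hr, ← add_sum_erase (OutS n k S) _ hr, hchoose, sum_const,
    card_erase_of_mem hr, smul_eq_mul, mul_one]
  omega

theorem cubeSign_eq (hS : S ∈ Sset n k) (hr : r ∈ OutS n k S) :
    (cubeSign n k S : ℤ) =
      cubeSign n k (Sr S r) * (-1) ^ dr S r * (-1) ^ #((cubeFace n k S).filter (· < r)) := by
  rw [cubeSign, cubeSign, ← signExp_Sr hS hr]
  push_cast
  ring

end sign

theorem dS_cubeTop {n k : ℕ} {S : Finset ℕ} (hS : S ∈ Sset n k) :
    dS (cubeTop n k S) = dS S + #(OutS n k S) := by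
  rw [dS, dS, cubeTop, dr_raise hS (fun _ => gap_of_mem_OutS hS) le_rfl,
    inter_eq_right.mpr OutS_subset_Icc]

theorem deg_cubeEquiv {n k : ℕ} (S : Sset n k) :
    (dS (cubeEquiv n k S).1.1 : ℤ) - #(InS k (cubeEquiv n k S).1.1) + #(cubeEquiv n k S).1.2 =
      dS S.1 := by
  have hsub := OutS_subset_InS_cubeTop S.2
  have hle := card_le_card hsub
  change (dS (cubeTop n k S) : ℤ) - #(InS k (cubeTop n k S)) + #(cubeFace n k S) = dS S.1
  rw [dS_cubeTop S.2, cubeFace, card_sdiff_of_subset hsub]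
  push_cast [hle]
  ring

theorem cubeUp_cubeFace_eq_zero {n k : ℕ} {S T : Finset ℕ} (hS : S ∈ Sset n k)
    (hT : T ∈ Sset n k) (htop : cubeTop n k T = cubeTop n k S)
    (hmove : ∀ r ∈ OutS n k S, T ≠ Sr S r) :
    cubeUp (InS k (cubeTop n k S)) (cubeFace n k T) (cubeFace n k S) = 0 := by
  refine cubeUp_eq_zero fun i hi hiS hface => ?_
  have hiO : i ∈ OutS n k S := by
    rw [← InS_cubeTop_sdiff_cubeFace hS]
    exact mem_sdiff.mpr ⟨hi, hiS⟩
  refine hmove i hiO (eq_of_cubeTop_eq_of_cubeFace_eq (Sr_mem_Sset hS hiO) hT ?_ ?_)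
  · rw [htop, cubeTop_Sr hS hiO]
  · rw [hface, cubeFace_Sr hS hiO]

theorem cubesD_cubeEquiv_mul_cubeSign {n k : ℕ} (T S : Sset n k) :
    cubesD n k (cubeEquiv n k T) (cubeEquiv n k S) * cubeSign n k S =
      cubeSign n k T * schubD n k ℤ T S := by
  change (if cubeTop n k T = cubeTop n k S then
      cubeUp (InS k (cubeTop n k S)) (cubeFace n k T) (cubeFace n k S) else 0) * _ =
    _ * schubCoeff n k ℤ T S
  obtain ⟨T, hT⟩ := T
  obtain ⟨S, hS⟩ := S
  by_cases hmove : ∃ r ∈ OutS n k S, T = Sr S r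
  · obtain ⟨r, hr, rfl⟩ := hmove
    rw [if_pos (cubeTop_Sr hS hr), cubeFace_Sr hS hr,
      cubeUp_insert (OutS_subset_InS_cubeTop hS hr) (not_mem_cubeFace hr),
      schubCoeff_Sr ℤ hS hr, cubeSign_eq hS hr]
    have hsq : ((-1 : ℤ) ^ #((cubeFace n k S).filter (· < r))) ^ 2 = 1 := by
      rw [← pow_mul, mul_comm, pow_mul, neg_one_sq, one_pow]
    linear_combination (cubeSign n k (Sr S r) : ℤ) * (-1) ^ dr S r * 2 * hsq
  · simp only [not_exists, not_and] at hmove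
    rw [schubCoeff_eq_zero ℤ hS hmove, mul_zero]
    split_ifs with htop
    · rw [cubeUp_cubeFace_eq_zero hS hT htop hmove, zero_mul]
    · rw [zero_mul]

theorem stmt3_general (n k : ℕ) :
    CxIso ℤ (schubD n k ℤ) (fun S => (dS S.1 : ℤ))
      (cubesD n k)
      (fun p => (dS p.1.1 : ℤ) - ((InS k p.1.1).card : ℤ) + (p.1.2.card : ℤ)) :=
  cxIso_of_equiv (cubeEquiv n k) (cubeSign n k ·) cubesD_cubeEquiv_mul_cubeSign deg_cubeEquiv

/-- the Schubert cochain complex over `ℤ` is isomorphic to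
`⊕_{S ∈ {n;k}, Out(S) = ∅} D^{⊗ card In(S)}`, with the summand indexed by `S` occupying
cohomological degrees `d(S) − card In(S)` through `d(S)`. -/
theorem stmt3 (n k : ℕ) (hk : k ≤ n) :
    CxIso ℤ (schubD n k ℤ) (fun S => (dS S.1 : ℤ))
      (cubesD n k)
      (fun p => (dS p.1.1 : ℤ) - ((InS k p.1.1).card : ℤ) + (p.1.2.card : ℤ)) :=
  stmt3_general n k
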